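/- Let s: [T_k, T_{k+1}] → ℝ be defined by s(t) = h·B((t - T_k)/h) where h = T_{k+1} - T_k > 0 and B is a degree-n Bézier polynomial with control points c_0,...,c_n. If p0_lo + h·p1_lo·(i/n) ≤ h·c_i ≤ p0_hi + h·p1_hi·(i/n) for all i, then for all t ∈ [T_k, T_{k+1}], p0_lo + p1_lo·(t - T_k) ≤ s(t) ≤ p0_hi + p1_hi·(t - T_k). -/

import Mathlib

/-- Bernstein basis polynomial `b_n^i(t) = C(n,i) t^i (1-t)^(n-i)`. -/
noncomputable def bern (n i : ℕ) (t : ℝ) : ℝ := (n.choose i : ℝ) * t ^ i * (1 - t) ^ (n - i)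

lemma bern_eq_eval (n i : ℕ) (t : ℝ) :
    bern n i t = (bernsteinPolynomial ℝ n i).eval t := by
  simp [bern, bernsteinPolynomial]

lemma bern_sum (n : ℕ) (t : ℝ) :
    ∑ i ∈ Finset.range (n + 1), bern n i t = 1 := by
  have := congrArg (Polynomial.eval t) (bernsteinPolynomial.sum ℝ n)
  simpa [bern_eq_eval, Polynomial.eval_finset_sum] using this

lemma bern_sum_mul (n : ℕ) (t : ℝ) :
    ∑ i ∈ Finset.range (n + 1), (i : ℝ) * bern n i t = n * t := by
  have := congrArg (Polynomial.eval t) (bernsteinPolynomial.sum_smul ℝ n)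
  simpa [bern_eq_eval, Polynomial.eval_finset_sum, mul_comm] using this

lemma bern_nonneg (n i : ℕ) {t : ℝ} (h0 : 0 ≤ t) (h1 : t ≤ 1) : 0 ≤ bern n i t := by
  have h2 : (0:ℝ) ≤ 1 - t := by linarith
  exact mul_nonneg (mul_nonneg (Nat.cast_nonneg _) (pow_nonneg h0 _)) (pow_nonneg h2 _)

/-- Trapezoidal corridor enforcement for a scaled/translated Bézier trajectory piece
`s(t) = h · B((t - T_k)/h)` on `[T_k, T_{k+1}]` with `h = T_{k+1} - T_k > 0`. -/
theorem stmt_15 (n : ℕ) (hn : 1 ≤ n) (c : ℕ → ℝ) (Tk Tk1 : ℝ) (h : ℝ)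
    (hdef : h = Tk1 - Tk) (hh : 0 < h) (p0_lo p1_lo p0_hi p1_hi : ℝ)
    (hc : ∀ i, i ≤ n →
      p0_lo + h * p1_lo * ((i : ℝ) / (n : ℝ)) ≤ h * c i ∧
      h * c i ≤ p0_hi + h * p1_hi * ((i : ℝ) / (n : ℝ))) :
    ∀ t ∈ Set.Icc Tk Tk1,
      p0_lo + p1_lo * (t - Tk) ≤
        h * ∑ i ∈ Finset.range (n + 1), c i * bern n i ((t - Tk) / h) ∧
      h * ∑ i ∈ Finset.range (n + 1), c i * bern n i ((t - Tk) / h) ≤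
        p0_hi + p1_hi * (t - Tk) := by
  intro t ht
  set x : ℝ := (t - Tk) / h with hx
  have hx0 : 0 ≤ x := div_nonneg (by linarith [ht.1]) hh.le
  have hx1 : x ≤ 1 := by
    rw [hx, div_le_one hh]; linarith [ht.2]
  have hhx : h * x = t - Tk := by
    rw [hx, mul_comm]; exact div_mul_cancel₀ (t - Tk) hh.ne'
  have hnpos : (0:ℝ) < n := by exact_mod_cast hn
  have key : h * ∑ i ∈ Finset.range (n + 1), c i * bern n i x
      = ∑ i ∈ Finset.range (n + 1), (h * c i) * bern n i x := by
    rw [Finset.mul_sum]; ring_nf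
  have hb : ∀ i ∈ Finset.range (n + 1), 0 ≤ bern n i x :=
    fun i _ => bern_nonneg n i hx0 hx1
  have hs1 := bern_sum n x
  have hs2 := bern_sum_mul n x
  constructor
  · have hlo : ∑ i ∈ Finset.range (n + 1),
        (p0_lo + h * p1_lo * ((i : ℝ) / (n : ℝ))) * bern n i x
        ≤ ∑ i ∈ Finset.range (n + 1), (h * c i) * bern n i x := by
      apply Finset.sum_le_sum
      intro i hi
      exact mul_le_mul_of_nonneg_right
        ((hc i (Nat.lt_succ_iff.mp (Finset.mem_range.mp hi))).1) (hb i hi)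
    have heq : ∑ i ∈ Finset.range (n + 1),
        (p0_lo + h * p1_lo * ((i : ℝ) / (n : ℝ))) * bern n i x
        = p0_lo + p1_lo * (t - Tk) := by
      have : ∀ i ∈ Finset.range (n + 1),
          (p0_lo + h * p1_lo * ((i : ℝ) / (n : ℝ))) * bern n i x
          = p0_lo * bern n i x + (h * p1_lo / n) * ((i:ℝ) * bern n i x) := by
        intro i _; field_simp
      rw [Finset.sum_congr rfl this, Finset.sum_add_distrib, ← Finset.mul_sum,
        ← Finset.mul_sum, hs1, hs2]
      rw [← hhx]
      field_simp
    rw [key]; linarith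
  · have hhi : ∑ i ∈ Finset.range (n + 1), (h * c i) * bern n i x
        ≤ ∑ i ∈ Finset.range (n + 1),
        (p0_hi + h * p1_hi * ((i : ℝ) / (n : ℝ))) * bern n i x := by
      apply Finset.sum_le_sum
      intro i hi
      exact mul_le_mul_of_nonneg_right
        ((hc i (Nat.lt_succ_iff.mp (Finset.mem_range.mp hi))).2) (hb i hi)
    have heq : ∑ i ∈ Finset.range (n + 1),
        (p0_hi + h * p1_hi * ((i : ℝ) / (n : ℝ))) * bern n i x
        = p0_hi + p1_hi * (t - Tk) := by
      have : ∀ i ∈ Finset.range (n + 1),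
          (p0_hi + h * p1_hi * ((i : ℝ) / (n : ℝ))) * bern n i x
          = p0_hi * bern n i x + (h * p1_hi / n) * ((i:ℝ) * bern n i x) := by
        intro i _; field_simp
      rw [Finset.sum_congr rfl this, Finset.sum_add_distrib, ← Finset.mul_sum,
        ← Finset.mul_sum, hs1, hs2]
      rw [← hhx]
      field_simp
    rw [key]; linarith
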